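/- Define the symmetrized third-order Dirichlet distortion on the positive orthant of ℝ³ by f^Sym(σ₁,σ₂,σ₃) = (1/2)·∑ᵢ₌₁³ σᵢ³ + (1/2)·(σ₁σ₂σ₃)·∑ₖ₌₁³ σₖ⁻³. Then: (i) f^Sym(σ) > 3/2 for every σ in the positive orthant; (ii) for every t > 0, f^Sym(t,t,t) = (3/2)·(t³ + 1), so the infimum of f^Sym over the positive orthant equals 3/2 and is not attained; (iii) f^Sym(1,1,1) = 3, and in particular (1,1,1) is not a minimizer, so the symmetrized third-order Dirichlet energy does not favor isometry. -/

import Mathlib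

/-! The inverse half `abc (a⁻³ + b⁻³ + c⁻³) / 2` of `f^Sym` is at least `3/2` by AM–GM applied to
`a⁻¹, b⁻¹, c⁻¹`, while the direct half `(a³ + b³ + c³) / 2` is positive, so `f^Sym > 3/2`. Along the
diagonal the direct half `3t³/2` tends to `0` as `t → 0⁺` while the inverse half is constantly
`3/2`, so `3/2` is the infimum. -/

/-- The symmetrized third-order Dirichlet distortion in singular values (3D). -/
noncomputable def fSymD3 (a b c : ℝ) : ℝ :=
  (1/2) * (a^3 + b^3 + c^3) +
  (1/2) * (a * b * c) * ((a⁻¹)^3 + (b⁻¹)^3 + (c⁻¹)^3)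

open Filter Topology

lemma three_mul_le_add_pow_three {x y z : ℝ} (hx : 0 ≤ x) (hy : 0 ≤ y) (hz : 0 ≤ z) :
    3 * (x * y * z) ≤ x ^ 3 + y ^ 3 + z ^ 3 := by
  -- `x³ + y³ + z³ - 3xyz = (x + y + z)((x - y)² + (y - z)² + (z - x)²) / 2`
  nlinarith [mul_nonneg (add_nonneg (add_nonneg hx hy) hz)
    (add_nonneg (add_nonneg (sq_nonneg (x - y)) (sq_nonneg (y - z))) (sq_nonneg (z - x)))]

lemma three_halves_le_inverse_part {a b c : ℝ} (ha : 0 < a) (hb : 0 < b) (hc : 0 < c) :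
    3 / 2 ≤ (1/2) * (a * b * c) * ((a⁻¹)^3 + (b⁻¹)^3 + (c⁻¹)^3) := by
  have hamgm := three_mul_le_add_pow_three (inv_pos.2 ha).le (inv_pos.2 hb).le (inv_pos.2 hc).le
  have hprod : a * b * c * (3 * (a⁻¹ * b⁻¹ * c⁻¹)) = 3 := by field_simp
  nlinarith [mul_le_mul_of_nonneg_left hamgm (by positivity : (0 : ℝ) ≤ a * b * c)]

lemma three_halves_lt_fSymD3 {a b c : ℝ} (ha : 0 < a) (hb : 0 < b) (hc : 0 < c) :
    3 / 2 < fSymD3 a b c := by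
  have hdirect : 0 < (1/2) * (a^3 + b^3 + c^3) := by positivity
  unfold fSymD3
  linarith [three_halves_le_inverse_part ha hb hc]

lemma fSymD3_diag {t : ℝ} (ht : t ≠ 0) : fSymD3 t t t = (3/2) * (t^3 + 1) := by
  unfold fSymD3
  field_simp
  ring

lemma tendsto_fSymD3_diag_zero :
    Tendsto (fun t ↦ fSymD3 t t t) (𝓝[>] 0) (𝓝 (3/2)) := by
  have hpoly : Tendsto (fun t : ℝ ↦ (3/2) * (t^3 + 1)) (𝓝[>] 0) (𝓝 (3/2)) := by
    apply tendsto_nhdsWithin_of_tendsto_nhds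
    exact (by fun_prop : Continuous fun t : ℝ ↦ (3/2) * (t^3 + 1)).tendsto' 0 _ (by norm_num)
  refine hpoly.congr' ?_
  filter_upwards [self_mem_nhdsWithin] with t ht
  exact (fSymD3_diag (ne_of_gt ht)).symm

/-- `f^Sym > 3/2` on the positive orthant; on the diagonal
`f^Sym(t,t,t) = (3/2)(t³ + 1)`, so the infimum over the positive orthant is
`3/2` and is not attained; `f^Sym(1,1,1) = 3` and `(1,1,1)` is not a
minimizer: the symmetrized third-order Dirichlet energy does not favor
isometry. -/
theorem statement_9 :
    (∀ a b c : ℝ, 0 < a → 0 < b → 0 < c → 3/2 < fSymD3 a b c) ∧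
    (∀ t : ℝ, 0 < t → fSymD3 t t t = (3/2) * (t^3 + 1)) ∧
    IsGLB {x : ℝ | ∃ a b c : ℝ, 0 < a ∧ 0 < b ∧ 0 < c ∧ x = fSymD3 a b c} (3/2) ∧
    (3/2 : ℝ) ∉ {x : ℝ | ∃ a b c : ℝ, 0 < a ∧ 0 < b ∧ 0 < c ∧ x = fSymD3 a b c} ∧
    fSymD3 1 1 1 = 3 ∧
    (∃ a b c : ℝ, 0 < a ∧ 0 < b ∧ 0 < c ∧ fSymD3 a b c < fSymD3 1 1 1) := by
  have hone : fSymD3 1 1 1 = 3 := by norm_num [fSymD3_diag one_ne_zero]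
  have hlower : 3/2 ∈ lowerBounds
      {x : ℝ | ∃ a b c : ℝ, 0 < a ∧ 0 < b ∧ 0 < c ∧ x = fSymD3 a b c} := by
    rintro x ⟨a, b, c, ha, hb, hc, rfl⟩
    exact (three_halves_lt_fSymD3 ha hb hc).le
  have hclosure : (3/2 : ℝ) ∈ closure
      {x : ℝ | ∃ a b c : ℝ, 0 < a ∧ 0 < b ∧ 0 < c ∧ x = fSymD3 a b c} := by
    refine mem_closure_of_tendsto tendsto_fSymD3_diag_zero ?_
    filter_upwards [self_mem_nhdsWithin] with t (ht : 0 < t)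
    exact ⟨t, t, t, ht, ht, ht, rfl⟩
  refine ⟨fun a b c ↦ three_halves_lt_fSymD3, fun t ht ↦ fSymD3_diag ht.ne',
    isGLB_of_mem_closure hlower hclosure, ?_, hone, ?_⟩
  · rintro ⟨a, b, c, ha, hb, hc, h⟩
    exact (three_halves_lt_fSymD3 ha hb hc).ne h
  · refine ⟨1/2, 1/2, 1/2, by norm_num, by norm_num, by norm_num, ?_⟩
    rw [hone, fSymD3_diag (by norm_num)]
    norm_num
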